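/- Let G be a finite bipartite graph with vertex bipartition into odd vertices g₁,…,g_p and even vertices g_{p+1},…,g_n, index λ = ind(G), r = λ² ≥ 4, principal eigenvector y, and standard vectors y_• = (y₁,…,y_p,0,…,0), y_∘ = (0,…,0,y_{p+1},…,y_n). Let c_t be the alternating products of partial Coxeter transformations c̄ = σ_{g_p}⋯σ_{g_1} and c̊ = σ_{g_n}⋯σ_{g_{p+1}}. Then for t ≥ 1: c_{−2t}(y_•) is proportional to y_• + (ρ_r(2t)/√r)·y_∘, and c_{−(2t+1)}(y_•) is proportional to y_• + (√r/ρ_r(2t+1))·y_∘. -/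
import Mathlib


open Finset

/-- The partial Coxeter transformation: simultaneous reflection in all vertices
belonging to the part `P` of a bipartition (these reflections commute, since no
two vertices of one part are adjacent). -/
def partCox {V : Type} [Fintype V] [DecidableEq V] (G : SimpleGraph V)
    [DecidableRel G.Adj] (P : V → Prop) [DecidablePred P] (x : V → ℝ) : V → ℝ :=
  fun v => if P v then -x v + ∑ h ∈ G.neighborFinset v, x h else x v

/-- c_{−k}: the alternating word of length k in the partial Coxeter
transformations, with the rightmost factor c̊ (reflection in even vertices);
`odd` is the predicate picking the odd part of the bipartition. -/
def coxNeg {V : Type} [Fintype V] [DecidableEq V] (G : SimpleGraph V)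
    [DecidableRel G.Adj] (odd : V → Prop) [DecidablePred odd] :
    ℕ → (V → ℝ) → (V → ℝ)
  | 0 => id
  | k + 1 =>
      (if Even k then partCox G (fun v => ¬ odd v) else partCox G odd) ∘
        coxNeg G odd k

/-- For a connected bipartite graph with r = (ind G)² ≥ 4 and principal
eigenvector y: c_{−2t}(y_•) ≃ y_• + (ρ_r(2t)/√r)·y_∘ and
c_{−(2t+1)}(y_•) ≃ y_• + (√r/ρ_r(2t+1))·y_∘. -/
theorem stmt_15 (V : Type) [Fintype V] [DecidableEq V]
    (G : SimpleGraph V) [DecidableRel G.Adj] (hG : G.Connected)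
    (odd : V → Prop) [DecidablePred odd]
    (hbip : ∀ u v : V, G.Adj u v → (odd u ↔ ¬ odd v))
    (lam : ℝ) (y : V → ℝ) (hy : ∀ v, 0 < y v)
    (heig : ∀ v, lam * y v = ∑ h ∈ G.neighborFinset v, y h)
    (r : ℝ) (hr : r = lam ^ 2) (hr4 : 4 ≤ r)
    (rho : ℕ → ℝ) (hrho0 : rho 0 = 0)
    (hrho : ∀ n : ℕ, rho (n + 1) = r / (r - rho n))
    (ybul ycirc : V → ℝ)
    (hybul : ∀ v, ybul v = if odd v then y v else 0)
    (hycirc : ∀ v, ycirc v = if odd v then 0 else y v) :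
    ∀ t : ℕ, 1 ≤ t →
      (∃ c : ℝ, c ≠ 0 ∧
        coxNeg G odd (2 * t) ybul =
          c • (ybul + (rho (2 * t) / Real.sqrt r) • ycirc)) ∧
      (∃ c : ℝ, c ≠ 0 ∧
        coxNeg G odd (2 * t + 1) ybul =
          c • (ybul + (Real.sqrt r / rho (2 * t + 1)) • ycirc)) := by
  have hrne : r ≠ 0 := by linarith
  have hlam_ne : lam ≠ 0 := by
    intro h
    rw [h] at hr
    simp at hr
    linarith
  obtain ⟨v0⟩ := hG.nonempty
  have hlam_pos : 0 < lam := by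
    have hs : 0 ≤ ∑ h ∈ G.neighborFinset v0, y h :=
      Finset.sum_nonneg fun h _ => (hy h).le
    have h1 : 0 ≤ lam * y v0 := (heig v0) ▸ hs
    rcases hlam_ne.lt_or_gt with hlt | hgt
    · nlinarith [hy v0]
    · exact hgt
  have hsqrt : Real.sqrt r = lam := by
    rw [hr, Real.sqrt_sq hlam_pos.le]
  -- bounds on rho
  have hrho_bd : ∀ n, 0 ≤ rho n ∧ rho n ≤ 2 := by
    intro n
    induction n with
    | zero => simp [hrho0]
    | succ n ih =>
      have hd : 0 < r - rho n := by linarith [ih.1, ih.2]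
      rw [hrho n]
      constructor
      · exact div_nonneg (by linarith) hd.le
      · rw [div_le_iff₀ hd]; linarith [ih.1]
  have hdpos : ∀ n, 0 < r - rho n := fun n => by linarith [(hrho_bd n).2]
  have hd1 : ∀ n, 1 < r - rho n := fun n => by linarith [(hrho_bd n).2]
  -- key identity for rho two steps ahead
  have hrho2 : ∀ n, (r - rho n - 1) * rho (n + 2) = r - rho n := by
    intro n
    have hd := hdpos n
    have hd' := hdpos (n + 1)
    have hs1 : rho (n + 1) * (r - rho n) = r := by
      rw [hrho n]; exact div_mul_cancel₀ r (ne_of_gt hd)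
    have hs2 : rho (n + 2) * (r - rho (n + 1)) = r := by
      rw [show n + 2 = (n + 1) + 1 from rfl, hrho (n + 1)]
      exact div_mul_cancel₀ r (ne_of_gt hd')
    have hg : r * ((r - rho n - 1) * rho (n + 2)) = r * (r - rho n) := by
      linear_combination (r - rho n) * hs2 + rho (n + 2) * hs1
    exact mul_left_cancel₀ hrne hg
  -- step lemmas
  have stepE : ∀ a b : ℝ,
      partCox G (fun v => ¬ odd v) (fun v => a * ybul v + b * ycirc v) =
        fun v => a * ybul v + (lam * a - b) * ycirc v := by
    intro a b
    funext w
    by_cases hw : odd w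
    · have hc : ycirc w = 0 := by rw [hycirc w, if_pos hw]
      simp only [partCox]
      rw [if_neg (not_not_intro hw), hc]
      ring
    · have hsum : ∑ h ∈ G.neighborFinset w, (a * ybul h + b * ycirc h)
          = a * (lam * y w) := by
        rw [heig w, Finset.mul_sum]
        apply Finset.sum_congr rfl
        intro h hh
        have hadj : G.Adj w h := by rwa [SimpleGraph.mem_neighborFinset] at hh
        have hodd : odd h := (hbip h w hadj.symm).mpr hw
        simp [hybul h, hycirc h, hodd]
      have hb : ybul w = 0 := by rw [hybul w, if_neg hw]
      have hc : ycirc w = y w := by rw [hycirc w, if_neg hw]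
      simp only [partCox]
      rw [if_pos hw, hsum, hb, hc]
      ring
  have stepO : ∀ a b : ℝ,
      partCox G odd (fun v => a * ybul v + b * ycirc v) =
        fun v => (lam * b - a) * ybul v + b * ycirc v := by
    intro a b
    funext w
    by_cases hw : odd w
    · have hsum : ∑ h ∈ G.neighborFinset w, (a * ybul h + b * ycirc h)
          = b * (lam * y w) := by
        rw [heig w, Finset.mul_sum]
        apply Finset.sum_congr rfl
        intro h hh
        have hadj : G.Adj w h := by rwa [SimpleGraph.mem_neighborFinset] at hh
        have hodd : ¬ odd h := by
          intro hh'
          exact ((hbip h w hadj.symm).mp hh') hw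
        simp [hybul h, hycirc h, hodd]
      have hb : ybul w = y w := by rw [hybul w, if_pos hw]
      have hc : ycirc w = 0 := by rw [hycirc w, if_pos hw]
      simp only [partCox]
      rw [if_pos hw, hsum, hb, hc]
      ring
    · have hb : ybul w = 0 := by rw [hybul w, if_neg hw]
      simp only [partCox]
      rw [if_neg hw, hb]
      ring
  -- passing from index 2t to 2t+1
  have oddstep : ∀ (t : ℕ) (a : ℝ),
      coxNeg G odd (2 * t) ybul =
        (fun v => a * ybul v + (a * rho (2 * t) / lam) * ycirc v) →
      coxNeg G odd (2 * t + 1) ybul =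
        fun v => a * ybul v + (a * (r - rho (2 * t)) / lam) * ycirc v := by
    intro t a hEq
    have hEven : Even (2 * t) := even_two_mul t
    show ((if Even (2 * t) then partCox G (fun v => ¬ odd v) else partCox G odd) ∘
        coxNeg G odd (2 * t)) ybul = _
    rw [if_pos hEven, Function.comp_apply, hEq, stepE]
    funext v
    have hc : lam * a - a * rho (2 * t) / lam = a * (r - rho (2 * t)) / lam := by
      field_simp
      rw [hr]
    rw [hc]
  -- main induction on t for the even-index formula
  have main : ∀ t, 1 ≤ t → ∃ a : ℝ, a ≠ 0 ∧
      coxNeg G odd (2 * t) ybul =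
        fun v => a * ybul v + (a * rho (2 * t) / lam) * ycirc v := by
    intro t ht
    induction t with
    | zero => omega
    | succ t ih =>
      by_cases ht0 : t = 0
      · subst ht0
        refine ⟨r - 1, by linarith, ?_⟩
        have hrho1 : rho 1 = 1 := by
          rw [hrho 0, hrho0, sub_zero, div_self hrne]
        have hrho2v : rho 2 = r / (r - 1) := by
          rw [hrho 1, hrho1]
        have hybul1 : ybul = fun v => (1 : ℝ) * ybul v + 0 * ycirc v := by
          funext v; ring
        rw [show 2 * 1 = 0 + 1 + 1 from rfl]
        show ((if Even (0 + 1) then partCox G (fun v => ¬ odd v) else partCox G odd) ∘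
            ((if Even 0 then partCox G (fun v => ¬ odd v) else partCox G odd) ∘ id)) ybul = _
        rw [if_pos (Even.zero), if_neg (by simp : ¬ Even (0 + 1))]
        show partCox G odd (partCox G (fun v => ¬ odd v) (id ybul)) = _
        rw [id_eq, hybul1, stepE, stepO]
        funext v
        rw [show 0 + 1 + 1 = 2 from rfl, hrho2v]
        have e1 : lam * (lam * 1 - 0) - 1 = r - 1 := by rw [hr]; ring
        have e2 : lam * 1 - 0 = (r - 1) * (r / (r - 1)) / lam := by
          have h1 : r - 1 ≠ 0 := by linarith
          field_simp
          rw [hr]; ring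
        rw [e1, e2]
        simp
      · have ht1 : 1 ≤ t := Nat.one_le_iff_ne_zero.mpr ht0
        obtain ⟨a, ha, hEq⟩ := ih ht1
        have h1 := oddstep t a hEq
        have hd := hdpos (2 * t)
        have hd1' := hd1 (2 * t)
        refine ⟨a * (r - rho (2 * t) - 1), mul_ne_zero ha (by linarith), ?_⟩
        rw [show 2 * (t + 1) = (2 * t + 1) + 1 by ring]
        show ((if Even (2 * t + 1) then partCox G (fun v => ¬ odd v) else partCox G odd) ∘
            coxNeg G odd (2 * t + 1)) ybul = _
        have hodd' : ¬ Even (2 * t + 1) := by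
          simp [Nat.even_add_one, even_two_mul t]
        rw [if_neg hodd', Function.comp_apply, h1, stepO]
        funext v
        have e1 : lam * (a * (r - rho (2 * t)) / lam) - a
            = a * (r - rho (2 * t) - 1) := by
          field_simp
        have e2 : a * (r - rho (2 * t)) / lam
            = a * (r - rho (2 * t) - 1) * rho (2 * t + 1 + 1) / lam := by
          have := hrho2 (2 * t)
          rw [show 2 * t + 1 + 1 = 2 * t + 2 from rfl]
          rw [div_eq_div_iff hlam_ne hlam_ne]
          linear_combination (-(a * lam)) * this
        rw [e1, e2]
  -- conclusion
  intro t ht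
  obtain ⟨a, ha, hEq⟩ := main t ht
  have h1 := oddstep t a hEq
  have hd := hdpos (2 * t)
  constructor
  · refine ⟨a, ha, ?_⟩
    rw [hEq]
    funext v
    simp only [Pi.smul_apply, Pi.add_apply, smul_eq_mul, hsqrt]
    field_simp
  · refine ⟨a, ha, ?_⟩
    rw [h1]
    funext v
    simp only [Pi.smul_apply, Pi.add_apply, smul_eq_mul, hsqrt]
    have hrhoval : rho (2 * t + 1) = r / (r - rho (2 * t)) := hrho (2 * t)
    have hrpos : 0 < rho (2 * t + 1) := by
      rw [hrhoval]; exact div_pos (by linarith) hd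
    have key : a * (r - rho (2 * t)) / lam
        = a * (lam / rho (2 * t + 1)) := by
      rw [hrhoval]
      field_simp
      rw [hr]
    rw [key]
    ring
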